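/- Let V be a finite type, c : V → V → ℝ≥0 a capacity function, S ⊆ V a subset, P ≥ 1 an integer, and s, t distinct vertices of V with s ∉ S and t ∉ S. Let c' be the P-reweighting of c with respect to S. For every s-t cut A' ⊆ V of c', the set A of vertices of the P-fold replication c_P of S consisting of all copies of vertices of A' (i.e., A = {u : u ∉ S, u ∈ A'} ∪ {(v,i) : v ∈ S ∩ A', i : Fin P}) is an s-t cut of c_P whose value equals the value of A' in c'. In particular, the minimum s-t cut value of c_P is at most the minimum s-t cut value of c'. -/
import Mathlib


/-!
STATEMENT 5: For every s-t cut `A'` of the P-reweighting `c'`, the set of all copies of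
vertices of `A'` is an s-t cut of the P-fold replication `c_P` of the same value.
In particular, the minimum s-t cut value of `c_P` is at most that of `c'`.
-/

open Finset

attribute [local instance] Classical.propDecidable

noncomputable section

/-- The value of the cut `A` for the capacity function `c`. -/
def cutValue {W : Type*} [Fintype W] (c : W → W → NNReal) (A : Finset W) : NNReal :=
  ∑ u ∈ A, ∑ v ∈ Aᶜ, c u v

/-- The minimum `s`-`t` cut value (the least value of an `s`-`t` cut). -/
def minCutValue {W : Type*} [Fintype W] (c : W → W → NNReal) (s t : W) : NNReal :=
  sInf {x : NNReal | ∃ A : Finset W, s ∈ A ∧ t ∉ A ∧ cutValue c A = x}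

/-- The capacity function of the `P`-fold replication of the subset `S`. -/
def repCap {V : Type*} (c : V → V → NNReal) (S : Set V) (P : ℕ) :
    ({v : V // v ∉ S} ⊕ (↥S × Fin P)) → ({v : V // v ∉ S} ⊕ (↥S × Fin P)) → NNReal
  | Sum.inl u, Sum.inl v => c u.1 v.1
  | Sum.inl u, Sum.inr (v, _) => c u.1 v.1
  | Sum.inr (v, _), Sum.inl u => c v.1 u.1
  | Sum.inr (u, i), Sum.inr (v, j) => if i = j then c u.1 v.1 else 0

/-- The `P`-reweighting of `c` with respect to `S`. -/
def reweight {V : Type*} (c : V → V → NNReal) (S : Set V) (P : ℕ) : V → V → NNReal :=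
  fun u v => if u ∈ S ∨ v ∈ S then (P : NNReal) * c u v else c u v

/-- The cut in the `P`-fold replication consisting of all copies of vertices of `A'`. -/
def liftCut {V : Type*} [Fintype V] (S : Set V) (P : ℕ) (A' : Finset V) :
    Finset ({v : V // v ∉ S} ⊕ (↥S × Fin P)) :=
  Finset.univ.filter (fun x =>
    match x with
    | Sum.inl u => u.1 ∈ A'
    | Sum.inr (v, _) => v.1 ∈ A')


lemma mem_liftCut_inl' {V : Type*} [Fintype V] {S : Set V} {P : ℕ} {A' : Finset V}
    (u : {v : V // v ∉ S}) : Sum.inl u ∈ liftCut S P A' ↔ u.1 ∈ A' := by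
  simp [liftCut]

lemma mem_liftCut_inr' {V : Type*} [Fintype V] {S : Set V} {P : ℕ} {A' : Finset V}
    (v : ↥S) (i : Fin P) : Sum.inr (v, i) ∈ liftCut S P A' ↔ v.1 ∈ A' := by
  simp [liftCut]

lemma cutValue_eq_sum' {W : Type*} [Fintype W] (c : W → W → NNReal) (A : Finset W) :
    cutValue c A = ∑ u : W, ∑ v : W, if u ∈ A ∧ v ∉ A then c u v else 0 := by
  have h1 : ∀ u : W, (∑ v : W, if u ∈ A ∧ v ∉ A then c u v else 0)
      = if u ∈ A then ∑ v ∈ Aᶜ, c u v else 0 := by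
    intro u
    by_cases hu : u ∈ A
    · simp only [hu, true_and, if_true]
      rw [← Finset.univ_inter Aᶜ, ← Finset.sum_ite_mem]
      simp
    · simp [hu]
  rw [show (∑ u : W, ∑ v : W, if u ∈ A ∧ v ∉ A then c u v else 0)
      = ∑ u : W, if u ∈ A then ∑ v ∈ Aᶜ, c u v else 0 from
    Finset.sum_congr rfl (fun u _ => h1 u)]
  rw [Finset.sum_ite_mem, Finset.univ_inter]
  rfl

lemma sum_ite_eq_fin' {P : ℕ} (x1 : Fin P) (p : Prop) [Decidable p] (a : NNReal) :
    (∑ x3 : Fin P, if p then if x1 = x3 then a else 0 else 0) = if p then a else 0 := by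
  split_ifs with h <;> simp

lemma liftCut_value_eq {V : Type*} [Fintype V] (c : V → V → NNReal) (S : Set V) (P : ℕ)
    (A' : Finset V) :
    cutValue (repCap c S P) (liftCut S P A') = cutValue (reweight c S P) A' := by
  rw [cutValue_eq_sum', cutValue_eq_sum']
  have hsplit : ∀ g : V → NNReal, (∑ u : V, g u)
      = (∑ a : ↥S, g a.1) + ∑ a : {v : V // v ∉ S}, g a.1 := by
    intro g
    rw [← Equiv.sum_comp (Equiv.sumCompl (· ∈ S)) g, Fintype.sum_sum_type]
    simp
  have h4 : ∀ (x y : {v : V // v ∉ S}),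
      (if (x:V) ∈ A' ∧ (y:V) ∉ A' then reweight c S P x y else 0)
      = if (x:V) ∈ A' ∧ (y:V) ∉ A' then c x y else 0 := by
    intro x y; simp [reweight, x.2, y.2]
  have h1 : ∀ (x : ↥S) (y : V),
      (if (x:V) ∈ A' ∧ y ∉ A' then reweight c S P x y else 0)
      = if (x:V) ∈ A' ∧ y ∉ A' then (P : NNReal) * c x y else 0 := by
    intro x y; simp [reweight, x.2]
  have h2 : ∀ (x : V) (y : ↥S),
      (if x ∈ A' ∧ (y:V) ∉ A' then reweight c S P x y else 0)
      = if x ∈ A' ∧ (y:V) ∉ A' then (P : NNReal) * c x y else 0 := by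
    intro x y; simp [reweight, y.2]
  simp only [Fintype.sum_sum_type, Fintype.sum_prod_type, mem_liftCut_inl', mem_liftCut_inr',
    repCap, hsplit, sum_ite_eq_fin', Finset.sum_const, Finset.card_univ, Fintype.card_fin,
    nsmul_eq_mul, h1, h2, h4, Finset.mul_sum, mul_ite, mul_zero, Finset.sum_add_distrib]
  ring

theorem liftCut_isCut_and_value_eq {V : Type*} [Fintype V]
    (c : V → V → NNReal) (S : Set V) (P : ℕ) (hP : 1 ≤ P)
    (s t : V) (hst : s ≠ t) (hs : s ∉ S) (ht : t ∉ S) :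
    (∀ A' : Finset V, s ∈ A' → t ∉ A' →
      (Sum.inl ⟨s, hs⟩ ∈ liftCut S P A' ∧
       Sum.inl ⟨t, ht⟩ ∉ liftCut S P A' ∧
       cutValue (repCap c S P) (liftCut S P A') = cutValue (reweight c S P) A')) ∧
    minCutValue (repCap c S P) (Sum.inl ⟨s, hs⟩) (Sum.inl ⟨t, ht⟩) ≤
      minCutValue (reweight c S P) s t := by
  constructor
  · intro A' hsA htA
    exact ⟨(mem_liftCut_inl' _).2 hsA, fun h => htA ((mem_liftCut_inl' _).1 h),
      liftCut_value_eq c S P A'⟩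
  · apply le_csInf
    · exact ⟨cutValue (reweight c S P) {s}, {s}, Finset.mem_singleton_self s,
        fun h => hst (Finset.mem_singleton.1 h).symm, rfl⟩
    · rintro x ⟨A', hsA, htA, rfl⟩
      exact csInf_le (OrderBot.bddBelow _)
        ⟨liftCut S P A', (mem_liftCut_inl' _).2 hsA,
          fun h => htA ((mem_liftCut_inl' _).1 h), liftCut_value_eq c S P A'⟩


end
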